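/- Let Δ be an IP polytope in ℝ^d and define Δ~ = conv(Δ* ∩ ℤ^d), the convex hull of the lattice points of the polar dual. Suppose Δ is IP-confined, i.e. 0 lies in the interior of Δ~. Then Δ ⊆ (Δ~)~ = Δ~~, and applying the operation three times returns Δ~: ((Δ~)~)~ = Δ~. In particular, Δ ↦ Δ~ restricts to an involution on the set of IPC-closed polytopes (those IP-confined polytopes with Δ~~ = Δ), and every reflexive polytope is IPC-closed, with Δ~ = Δ*. -/

import Mathlib

/-- A point of `ℝ^d` is a lattice point if all its coordinates are integers. -/
def IsLatticePoint {d : ℕ} (x : Fin d → ℝ) : Prop := ∀ i, ∃ z : ℤ, x i = (z : ℝ)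

/-- A lattice polytope in `ℝ^d` is the convex hull of a finite set of lattice points. -/
def IsLatticePolytope {d : ℕ} (P : Set (Fin d → ℝ)) : Prop :=
  ∃ V : Finset (Fin d → ℝ), (∀ v ∈ V, IsLatticePoint v) ∧ P = convexHull ℝ (V : Set (Fin d → ℝ))

/-- An IP polytope: a full-dimensional lattice polytope whose interior contains exactly one
lattice point, namely the origin. -/
def IsIPPolytope {d : ℕ} (P : Set (Fin d → ℝ)) : Prop :=
  IsLatticePolytope P ∧ (0 : Fin d → ℝ) ∈ interior P ∧
    ∀ x ∈ interior P, IsLatticePoint x → x = 0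

/-- The polar dual of a set `P ⊆ ℝ^d`. -/
def polarDual {d : ℕ} (P : Set (Fin d → ℝ)) : Set (Fin d → ℝ) :=
  {y | ∀ x ∈ P, -1 ≤ ∑ i, y i * x i}

/-- A reflexive polytope is an IP polytope whose polar dual is a lattice polytope. -/
def IsReflexive {d : ℕ} (P : Set (Fin d → ℝ)) : Prop :=
  IsIPPolytope P ∧ IsLatticePolytope (polarDual P)

/-- `Δ~ = conv(Δ* ∩ ℤ^d)`, the convex hull of the lattice points of the polar dual. -/
def tildeDual {d : ℕ} (P : Set (Fin d → ℝ)) : Set (Fin d → ℝ) :=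
  convexHull ℝ {y ∈ polarDual P | IsLatticePoint y}

/-!
Every point of `P` pairs to `≥ -1` with `P*` and hence with `P~ ⊆ P*`, so the lattice vertices of
a lattice polytope `Δ` lie in `(Δ~)*` and `Δ ⊆ Δ~~`. Since `~` reverses inclusions, `Δ~~~ ⊆ Δ~`,
and conversely `Δ~ ⊆ Δ~~~` because `Δ~` is itself the hull of lattice points.

For `0 ∈ int Δ`, `Δ*` is bounded, so `Δ~` is a lattice polytope. A lattice point `x` in the
interior of `Δ~ ⊆ Δ*` satisfies `x ⬝ᵥ v > -1`, hence `x ⬝ᵥ v ≥ 0` by integrality, at every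
vertex `v ≠ 0` of `Δ`; then `x ⬝ᵥ y ≥ 0` on a neighbourhood of `0`, forcing `x = 0`.

For reflexive `Δ`, `Δ*` is the hull of its lattice points, so `Δ~ = Δ*` and `Δ~~ = Δ** = Δ`.
-/

open Filter Topology

theorem exists_pos_add_smul_mem {E : Type*} [AddCommGroup E] [TopologicalSpace E] [Module ℝ E]
    [ContinuousAdd E] [ContinuousSMul ℝ E] {s : Set E} {x : E} (hs : s ∈ 𝓝 x) (v : E) :
    ∃ t : ℝ, 0 < t ∧ x + t • v ∈ s := by
  have hline : Tendsto (fun t : ℝ => x + t • v) (𝓝[>] 0) (𝓝 x) := by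
    have hcont : Continuous fun t : ℝ => x + t • v := by fun_prop
    simpa using (hcont.tendsto 0).mono_left nhdsWithin_le_nhds
  obtain ⟨t, hts, ht⟩ := ((hline.eventually hs).and self_mem_nhdsWithin).exists
  exact ⟨t, ht, hts⟩

theorem convex_setOf_le_dotProduct {ι : Type*} [Fintype ι] (v : ι → ℝ) (r : ℝ) :
    Convex ℝ {y | r ≤ v ⬝ᵥ y} :=
  convex_halfSpace_ge ⟨dotProduct_add v, fun c w => dotProduct_smul c v w⟩ r

theorem dotProduct_self_pos_of_ne_zero {ι : Type*} [Fintype ι] {v : ι → ℝ} (hv : v ≠ 0) :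
    0 < v ⬝ᵥ v := by
  simpa only [star_trivial] using Matrix.dotProduct_star_self_pos_iff.2 hv

section
variable {d : ℕ}

theorem IsLatticePoint.exists_dotProduct_eq_intCast {x v : Fin d → ℝ} (hx : IsLatticePoint x)
    (hv : IsLatticePoint v) : ∃ z : ℤ, x ⬝ᵥ v = z := by
  choose a ha using hx
  choose b hb using hv
  exact ⟨∑ i, a i * b i, by simp [dotProduct, ha, hb]⟩

theorem IsLatticePoint.dotProduct_nonneg_of_neg_one_lt {x v : Fin d → ℝ} (hx : IsLatticePoint x)
    (hv : IsLatticePoint v) (h : -1 < x ⬝ᵥ v) : 0 ≤ x ⬝ᵥ v := by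
  obtain ⟨z, hz⟩ := hx.exists_dotProduct_eq_intCast hv
  rw [hz] at h ⊢
  have hz' : -1 < z := by exact_mod_cast h
  exact_mod_cast (show 0 ≤ z by omega)

theorem mem_polarDual {P : Set (Fin d → ℝ)} {y : Fin d → ℝ} :
    y ∈ polarDual P ↔ ∀ x ∈ P, -1 ≤ y ⬝ᵥ x :=
  Iff.rfl

theorem polarDual_anti {P Q : Set (Fin d → ℝ)} (h : P ⊆ Q) : polarDual Q ⊆ polarDual P :=
  fun _ hy x hx => hy x (h hx)

theorem convex_polarDual (P : Set (Fin d → ℝ)) : Convex ℝ (polarDual P) := by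
  have hP : polarDual P = ⋂ x ∈ P, {y | -1 ≤ x ⬝ᵥ y} := by
    ext y
    simp [mem_polarDual, dotProduct_comm y]
  rw [hP]
  exact convex_iInter₂ fun x _ => convex_setOf_le_dotProduct x (-1)

theorem polarDual_convexHull (S : Set (Fin d → ℝ)) :
    polarDual (convexHull ℝ S) = polarDual S :=
  (polarDual_anti (subset_convexHull ℝ S)).antisymm fun _ hy _ hx =>
    convexHull_min (fun x hx => hy x hx) (convex_setOf_le_dotProduct _ (-1)) hx

theorem subset_polarDual_polarDual (P : Set (Fin d → ℝ)) : P ⊆ polarDual (polarDual P) :=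
  fun x hx => mem_polarDual.2 fun y hy => by rw [dotProduct_comm]; exact hy x hx

theorem polarDual_polarDual {P : Set (Fin d → ℝ)} (hconv : Convex ℝ P) (hcl : IsClosed P)
    (h0 : (0 : Fin d → ℝ) ∈ P) : polarDual (polarDual P) = P := by
  refine subset_antisymm (fun x hx => ?_) (subset_polarDual_polarDual P)
  by_contra hxP
  obtain ⟨f, u, hfP, hfx⟩ := geometric_hahn_banach_closed_point hconv hcl hxP
  have hu : 0 < u := by simpa using hfP 0 h0
  -- Rescaled by `-u⁻¹`, the separating functional lies in `P*` but pairs with `x` below `-1`.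
  set w := (dotProductEquiv ℝ (Fin d)).symm (f : (Fin d → ℝ) →ₗ[ℝ] ℝ)
  have hf : ∀ y, f y = w ⬝ᵥ y := fun y =>
    (LinearMap.congr_fun ((dotProductEquiv ℝ (Fin d)).apply_symm_apply
      (f : (Fin d → ℝ) →ₗ[ℝ] ℝ)) y).symm
  have hw : -u⁻¹ • w ∈ polarDual P := mem_polarDual.2 fun a ha => by
    rw [smul_dotProduct, smul_eq_mul, ← hf, neg_mul, neg_le_neg_iff, inv_mul_le_one₀ hu]
    exact (hfP a ha).le
  have hx' := mem_polarDual.1 hx _ hw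
  rw [dotProduct_comm, smul_dotProduct, smul_eq_mul, ← hf, neg_mul, neg_le_neg_iff,
    inv_mul_le_one₀ hu] at hx'
  linarith

theorem tildeDual_subset_polarDual (P : Set (Fin d → ℝ)) : tildeDual P ⊆ polarDual P :=
  convexHull_min (fun _ hy => hy.1) (convex_polarDual P)

theorem tildeDual_anti {P Q : Set (Fin d → ℝ)} (h : P ⊆ Q) : tildeDual Q ⊆ tildeDual P :=
  convexHull_mono fun _ hy => ⟨polarDual_anti h hy.1, hy.2⟩

theorem convexHull_subset_tildeDual {S P : Set (Fin d → ℝ)} (hS : ∀ s ∈ S, IsLatticePoint s)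
    (h : S ⊆ polarDual P) : convexHull ℝ S ⊆ tildeDual P :=
  convexHull_mono fun s hs => ⟨h hs, hS s hs⟩

theorem subset_polarDual_tildeDual (P : Set (Fin d → ℝ)) : P ⊆ polarDual (tildeDual P) := by
  rw [tildeDual, polarDual_convexHull]
  exact fun x hx => mem_polarDual.2 fun y hy => by rw [dotProduct_comm]; exact hy.1 x hx

theorem convexHull_subset_tildeDual_tildeDual {S : Set (Fin d → ℝ)}
    (hS : ∀ s ∈ S, IsLatticePoint s) :
    convexHull ℝ S ⊆ tildeDual (tildeDual (convexHull ℝ S)) :=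
  convexHull_subset_tildeDual hS
    ((subset_convexHull ℝ S).trans (subset_polarDual_tildeDual _))

theorem IsLatticePolytope.subset_tildeDual_tildeDual {P : Set (Fin d → ℝ)}
    (hP : IsLatticePolytope P) : P ⊆ tildeDual (tildeDual P) := by
  obtain ⟨V, hV, rfl⟩ := hP
  exact convexHull_subset_tildeDual_tildeDual hV

theorem IsLatticePolytope.tildeDual_tildeDual_tildeDual {P : Set (Fin d → ℝ)}
    (hP : IsLatticePolytope P) : tildeDual (tildeDual (tildeDual P)) = tildeDual P :=
  (tildeDual_anti hP.subset_tildeDual_tildeDual).antisymm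
    (convexHull_subset_tildeDual_tildeDual fun _ hy => hy.2)

theorem IsLatticePolytope.convex {P : Set (Fin d → ℝ)} (hP : IsLatticePolytope P) :
    Convex ℝ P := by
  obtain ⟨V, -, rfl⟩ := hP
  exact convex_convexHull ℝ _

theorem IsLatticePolytope.isClosed {P : Set (Fin d → ℝ)} (hP : IsLatticePolytope P) :
    IsClosed P := by
  obtain ⟨V, -, rfl⟩ := hP
  exact V.finite_toSet.isClosed_convexHull (𝕜 := ℝ)

theorem neg_one_lt_dotProduct_of_mem_interior_polarDual {P : Set (Fin d → ℝ)} {x v : Fin d → ℝ}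
    (hx : x ∈ interior (polarDual P)) (hv : v ∈ P) (hv0 : v ≠ 0) : -1 < x ⬝ᵥ v := by
  obtain ⟨t, ht, hxt⟩ := exists_pos_add_smul_mem (mem_interior_iff_mem_nhds.1 hx) (-v)
  have h := mem_polarDual.1 hxt v hv
  rw [add_dotProduct, smul_dotProduct, neg_dotProduct, smul_eq_mul] at h
  nlinarith [dotProduct_self_pos_of_ne_zero hv0]

theorem eq_zero_of_forall_dotProduct_nonneg {P : Set (Fin d → ℝ)} {x : Fin d → ℝ}
    (h0 : (0 : Fin d → ℝ) ∈ interior P) (hx : ∀ y ∈ P, 0 ≤ x ⬝ᵥ y) : x = 0 := by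
  obtain ⟨t, ht, hxt⟩ := exists_pos_add_smul_mem (mem_interior_iff_mem_nhds.1 h0) (-x)
  have h := hx _ hxt
  rw [zero_add, dotProduct_smul, dotProduct_neg, smul_eq_mul] at h
  by_contra hx0
  nlinarith [dotProduct_self_pos_of_ne_zero hx0]

theorem IsLatticePolytope.eq_zero_of_mem_interior_polarDual {P : Set (Fin d → ℝ)}
    (hP : IsLatticePolytope P) (h0 : (0 : Fin d → ℝ) ∈ interior P) {x : Fin d → ℝ}
    (hx : x ∈ interior (polarDual P)) (hxl : IsLatticePoint x) : x = 0 := by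
  obtain ⟨V, hV, rfl⟩ := hP
  refine eq_zero_of_forall_dotProduct_nonneg h0 fun y hy => ?_
  refine convexHull_min (fun v hv => ?_) (convex_setOf_le_dotProduct x 0) hy
  rcases eq_or_ne v 0 with rfl | hv0
  · simp
  exact hxl.dotProduct_nonneg_of_neg_one_lt (hV v hv)
    (neg_one_lt_dotProduct_of_mem_interior_polarDual hx (subset_convexHull ℝ _ hv) hv0)

theorem abs_apply_le_of_mem_polarDual {P : Set (Fin d → ℝ)} {r : ℝ} (hr : 0 < r)
    (hP : Metric.closedBall 0 r ⊆ P) {y : Fin d → ℝ} (hy : y ∈ polarDual P) (i : Fin d) :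
    |y i| ≤ 1 / r := by
  have hsingle : ∀ s : ℝ, |s| = r → -1 ≤ y i * s := fun s hs => by
    rw [← dotProduct_single]
    exact mem_polarDual.1 hy _ (hP (by simp [Pi.norm_single, hs]))
  have h₁ := hsingle r (abs_of_pos hr)
  have h₂ := hsingle (-r) (by rw [abs_neg, abs_of_pos hr])
  rw [le_div_iff₀ hr]
  rcases abs_cases (y i) with ⟨h, -⟩ | ⟨h, -⟩ <;> rw [h] <;> linarith

theorem finite_latticePoints_of_abs_apply_le {S : Set (Fin d → ℝ)} {c : ℝ}
    (hS : ∀ y ∈ S, ∀ i, |y i| ≤ c) : {y ∈ S | IsLatticePoint y}.Finite := by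
  let N : Fin d → ℤ := fun _ => ⌈c⌉
  refine ((Set.finite_Icc (-N) N).image fun z i => (z i : ℝ)).subset ?_
  rintro y ⟨hyS, hyl⟩
  choose z hz using hyl
  refine ⟨z, ⟨fun i => ?_, fun i => ?_⟩, funext fun i => (hz i).symm⟩ <;>
  · have hzi : ((|z i| : ℤ) : ℝ) ≤ ⌈c⌉ := by
      push_cast
      exact (hz i ▸ hS y hyS i).trans (Int.le_ceil c)
    have := abs_le.1 (Int.cast_le.1 hzi)
    simp only [N, Pi.neg_apply]
    omega

theorem isLatticePolytope_tildeDual {P : Set (Fin d → ℝ)} (h0 : (0 : Fin d → ℝ) ∈ interior P) :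
    IsLatticePolytope (tildeDual P) := by
  obtain ⟨r, hr, hball⟩ := Metric.nhds_basis_closedBall.mem_iff.1 (mem_interior_iff_mem_nhds.1 h0)
  have hfin := finite_latticePoints_of_abs_apply_le fun y hy =>
    abs_apply_le_of_mem_polarDual hr hball hy
  exact ⟨hfin.toFinset, fun v hv => (hfin.mem_toFinset.1 hv).2, by rw [hfin.coe_toFinset]; rfl⟩

theorem IsIPPolytope.isIPPolytope_tildeDual {P : Set (Fin d → ℝ)} (hP : IsIPPolytope P)
    (hconf : (0 : Fin d → ℝ) ∈ interior (tildeDual P)) : IsIPPolytope (tildeDual P) :=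
  ⟨isLatticePolytope_tildeDual hP.2.1, hconf, fun _ hx hxl =>
    hP.1.eq_zero_of_mem_interior_polarDual hP.2.1
      (interior_mono (tildeDual_subset_polarDual P) hx) hxl⟩

theorem tildeDual_eq_polarDual {P : Set (Fin d → ℝ)} (h : IsLatticePolytope (polarDual P)) :
    tildeDual P = polarDual P := by
  obtain ⟨W, hW, hPW⟩ := h
  refine (tildeDual_subset_polarDual P).antisymm ?_
  rw [hPW]
  exact convexHull_subset_tildeDual hW ((subset_convexHull ℝ _).trans hPW.symm.subset)

theorem IsReflexive.tildeDual_tildeDual {P : Set (Fin d → ℝ)} (hP : IsReflexive P) :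
    tildeDual (tildeDual P) = P := by
  obtain ⟨⟨hlat, h0, -⟩, hdual⟩ := hP
  refine subset_antisymm ?_ hlat.subset_tildeDual_tildeDual
  calc tildeDual (tildeDual P) = tildeDual (polarDual P) := by rw [tildeDual_eq_polarDual hdual]
    _ ⊆ polarDual (polarDual P) := tildeDual_subset_polarDual _
    _ = P := polarDual_polarDual hlat.convex hlat.isClosed (interior_subset h0)

end

/-- for an IP-confined IP polytope `Δ` (i.e. `0 ∈ interior Δ~`) one has
`Δ ⊆ Δ~~` and `Δ~~~ = Δ~`; hence `Δ ↦ Δ~` restricts to an involution on IPC-closed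
polytopes (those with `Δ~~ = Δ`), and every reflexive polytope is IPC-closed with
`Δ~ = Δ*`. -/
theorem tildeDual_involution {d : ℕ} (Δ : Set (Fin d → ℝ))
    (hΔ : IsIPPolytope Δ)
    (hconf : (0 : Fin d → ℝ) ∈ interior (tildeDual Δ)) :
    Δ ⊆ tildeDual (tildeDual Δ) ∧
    tildeDual (tildeDual (tildeDual Δ)) = tildeDual Δ ∧
    (tildeDual (tildeDual Δ) = Δ →
      IsIPPolytope (tildeDual Δ) ∧
      (0 : Fin d → ℝ) ∈ interior (tildeDual (tildeDual Δ)) ∧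
      tildeDual (tildeDual (tildeDual Δ)) = tildeDual Δ) ∧
    (IsReflexive Δ → tildeDual Δ = polarDual Δ ∧ tildeDual (tildeDual Δ) = Δ) := by
  have htriple := hΔ.1.tildeDual_tildeDual_tildeDual
  refine ⟨hΔ.1.subset_tildeDual_tildeDual, htriple, fun hclosed => ⟨?_, ?_, htriple⟩,
    fun hrefl => ⟨tildeDual_eq_polarDual hrefl.2, hrefl.tildeDual_tildeDual⟩⟩
  · exact hΔ.isIPPolytope_tildeDual hconf
  · rw [hclosed]
    exact hΔ.2.1
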